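/- arXiv:2403.08185 — 3 statements merged into one kernel-verified Lean document; each statement's English description precedes it below -/
import Mathlib

section
/- Let N ≥ 1 and ε ∈ (0,1) be such that k := ⌈(N+1)(1−ε)⌉ satisfies k ≤ N. Let U₁, …, U_{N+1} be real-valued random variables on a probability space whose joint law is exchangeable (invariant under every permutation of the indices 1, …, N+1). Let q̂ denote the k-th order statistic of U₁, …, U_N (the k-th smallest value among the first N samples). Then ℙ(U_{N+1} ≤ q̂) ≥ 1 − ε. -/
open MeasureTheory

/-- The `k`-th order statistic (the `k`-th smallest value, zero-indexed) of a
finite tuple of values in a linear order. -/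
noncomputable def orderStat {α : Type*} [LinearOrder α] {N : ℕ} (k : Fin N) (v : Fin N → α) : α :=
  v (Tuple.sort v k)


open Finset in
lemma card_filter_comp_perm {n : ℕ} (σ : Equiv.Perm (Fin n)) (p : Fin n → Prop)
    [DecidablePred p] :
    (Finset.univ.filter fun i => p (σ i)).card = (Finset.univ.filter p).card := by
  apply Finset.card_equiv σ
  intro i
  simp

open Finset in
lemma le_orderStat_iff {N : ℕ} (m : Fin N) (w : Fin N → ℝ) (t : ℝ) :
    t ≤ orderStat m w ↔ (Finset.univ.filter fun i => w i < t).card ≤ (m : ℕ) := by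
  classical
  have hmono := Tuple.monotone_sort w
  have hperm : (Finset.univ.filter fun p => w (Tuple.sort w p) < t).card
      = (Finset.univ.filter fun i => w i < t).card :=
    card_filter_comp_perm (Tuple.sort w) (fun i => w i < t)
  constructor
  · intro h
    rw [← hperm]
    have hsub : (Finset.univ.filter fun p => w (Tuple.sort w p) < t) ⊆ Finset.Iio m := by
      intro p hp
      rw [Finset.mem_filter] at hp
      rw [Finset.mem_Iio]
      by_contra hpm
      push_neg at hpm
      exact absurd (le_trans h (hmono hpm)) (not_le.2 hp.2)
    calc (Finset.univ.filter fun p => w (Tuple.sort w p) < t).card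
        ≤ (Finset.Iio m).card := Finset.card_le_card hsub
      _ = (m : ℕ) := Fin.card_Iio m
  · intro h
    by_contra hlt
    push_neg at hlt
    have hsub : Finset.Iic m ⊆ Finset.univ.filter fun p => w (Tuple.sort w p) < t := by
      intro p hp
      rw [Finset.mem_Iic] at hp
      rw [Finset.mem_filter]
      exact ⟨Finset.mem_univ _, lt_of_le_of_lt (hmono hp) hlt⟩
    have := Finset.card_le_card hsub
    rw [Fin.card_Iic, hperm] at this
    omega

open Finset in
lemma count_rank_le {N : ℕ} (k : ℕ) (hk1 : 1 ≤ k) (hkN : k ≤ N) (v : Fin (N + 1) → ℝ) :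
    k ≤ (Finset.univ.filter fun j : Fin (N + 1) =>
      (Finset.univ.filter fun i => v i < v j).card ≤ k - 1).card := by
  classical
  set τ := Tuple.sort v with hτ
  have hmono := Tuple.monotone_sort v
  set b : Fin (N + 1) := ⟨k, by omega⟩ with hb
  have key : ∀ p : Fin (N + 1), (p : ℕ) < k →
      (Finset.univ.filter fun i => v i < v (τ p)).card ≤ k - 1 := by
    intro p hpk
    have hsub : (Finset.univ.filter fun i => v i < v (τ p)) ⊆ (Finset.Iio p).image τ := by
      intro i hi
      rw [Finset.mem_filter] at hi
      rw [Finset.mem_image]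
      refine ⟨τ.symm i, ?_, by simp⟩
      rw [Finset.mem_Iio]
      by_contra hq
      push_neg at hq
      have h2 : v (τ p) ≤ v (τ (τ.symm i)) := hmono hq
      rw [Equiv.apply_symm_apply] at h2
      exact absurd hi.2 (not_lt.2 h2)
    calc (Finset.univ.filter fun i => v i < v (τ p)).card
        ≤ ((Finset.Iio p).image τ).card := Finset.card_le_card hsub
      _ ≤ (Finset.Iio p).card := Finset.card_image_le
      _ = (p : ℕ) := Fin.card_Iio p
      _ ≤ k - 1 := by omega
  have himg : (Finset.Iio b).image τ ⊆ Finset.univ.filter fun j : Fin (N + 1) =>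
      (Finset.univ.filter fun i => v i < v j).card ≤ k - 1 := by
    intro j hj
    rw [Finset.mem_image] at hj
    obtain ⟨p, hp, rfl⟩ := hj
    rw [Finset.mem_Iio] at hp
    exact Finset.mem_filter.2 ⟨Finset.mem_univ _, key p hp⟩
  calc k = (Finset.Iio b).card := (Fin.card_Iio b).symm
    _ = ((Finset.Iio b).image τ).card :=
        (Finset.card_image_of_injective _ τ.injective).symm
    _ ≤ _ := Finset.card_le_card himg

/-- Marginal conformal prediction coverage guarantee: if `U 0, …, U N` are exchangeable
real-valued random variables, `k = ⌈(N+1)(1-ε)⌉ ≤ N`, and `q̂` is the `k`-th order statistic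
of the first `N` samples, then `ℙ(U test ≤ q̂) ≥ 1 - ε`. -/
theorem marginal_conformal_coverage
    {Ω : Type*} [MeasurableSpace Ω] (ℙ : Measure Ω) [IsProbabilityMeasure ℙ]
    (N : ℕ) (hN : 1 ≤ N) (ε : ℝ) (hε : ε ∈ Set.Ioo (0 : ℝ) 1)
    (k : ℕ) (hk : (k : ℤ) = ⌈((N : ℝ) + 1) * (1 - ε)⌉) (hkN : k ≤ N)
    (U : Fin (N + 1) → Ω → ℝ) (hU : ∀ i, Measurable (U i))
    (hexch : ∀ σ : Equiv.Perm (Fin (N + 1)),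
      Measure.map (fun ω => fun i => U (σ i) ω) ℙ = Measure.map (fun ω => fun i => U i ω) ℙ) :
    ℙ {ω | U (Fin.last N) ω ≤
        orderStat (⟨k - 1, by omega⟩ : Fin N) (fun i : Fin N => U i.castSucc ω)} ≥
      ENNReal.ofReal (1 - ε) := by
  classical
  obtain ⟨hε0, hε1⟩ := hε
  -- k ≥ 1
  have hk1 : 1 ≤ k := by
    have h1e : (0 : ℝ) < 1 - ε := by linarith
    have hpos : (0 : ℝ) < ((N : ℝ) + 1) * (1 - ε) := by positivity
    have := Int.ceil_pos.mpr hpos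
    omega
  -- k ≥ (N+1)(1-ε)
  have hk_ge : ((N : ℝ) + 1) * (1 - ε) ≤ (k : ℝ) := by
    have h1 := Int.le_ceil (((N : ℝ) + 1) * (1 - ε))
    rw [← hk] at h1
    exact_mod_cast h1
  have hUvec : Measurable fun ω i => U i ω := measurable_pi_lambda _ hU
  set μ : Measure (Fin (N + 1) → ℝ) := Measure.map (fun ω i => U i ω) ℙ with hμ
  have : IsProbabilityMeasure μ := Measure.isProbabilityMeasure_map hUvec.aemeasurable
  set S : Fin (N + 1) → Set (Fin (N + 1) → ℝ) := fun j =>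
    { v | (Finset.univ.filter fun i => v i < v j).card ≤ k - 1 } with hSdef
  have hScount : ∀ j : Fin (N + 1),
      Measurable fun v : Fin (N + 1) → ℝ => (Finset.univ.filter fun i => v i < v j).card := by
    intro j
    simp only [Finset.card_filter]
    exact Finset.measurable_sum _ fun i _ =>
      Measurable.ite (measurableSet_lt (measurable_pi_apply i) (measurable_pi_apply j))
        measurable_const measurable_const
  have hSmeas : ∀ j, MeasurableSet (S j) := fun j =>
    measurableSet_le (hScount j) measurable_const
  -- invariance of μ under permutations
  have hmap : ∀ σ : Equiv.Perm (Fin (N + 1)),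
      Measure.map (fun v : Fin (N + 1) → ℝ => v ∘ σ) μ = μ := by
    intro σ
    have hcomp : Measurable fun v : Fin (N + 1) → ℝ => v ∘ σ :=
      measurable_pi_lambda _ fun i => measurable_pi_apply (σ i)
    rw [hμ, Measure.map_map hcomp hUvec]
    exact hexch σ
  -- all S j have the same measure
  have hSj : ∀ j, μ (S j) = μ (S (Fin.last N)) := by
    intro j
    set σ := Equiv.swap j (Fin.last N) with hσdef
    have hcomp : Measurable fun v : Fin (N + 1) → ℝ => v ∘ σ :=
      measurable_pi_lambda _ fun i => measurable_pi_apply (σ i)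
    have hpre : S j = (fun v : Fin (N + 1) → ℝ => v ∘ σ) ⁻¹' S (Fin.last N) := by
      ext v
      simp only [hSdef, Set.mem_setOf_eq, Set.mem_preimage, Function.comp]
      simp only [hσdef, Equiv.swap_apply_right]
      rw [card_filter_comp_perm (Equiv.swap j (Fin.last N)) (fun i => v i < v j)]
    rw [hpre, ← Measure.map_apply hcomp (hSmeas (Fin.last N)), hmap σ]
  -- pointwise counting bound
  have hcount : ∀ v : Fin (N + 1) → ℝ,
      (k : ENNReal) ≤ ∑ j, (S j).indicator (1 : (Fin (N + 1) → ℝ) → ENNReal) v := by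
    intro v
    have heq : ∑ j, (S j).indicator (1 : (Fin (N + 1) → ℝ) → ENNReal) v
        = ((Finset.univ.filter fun j : Fin (N + 1) =>
            (Finset.univ.filter fun i => v i < v j).card ≤ k - 1).card : ENNReal) := by
      rw [Finset.card_filter, Nat.cast_sum]
      refine Finset.sum_congr rfl fun j _ => ?_
      by_cases h : (Finset.univ.filter fun i => v i < v j).card ≤ k - 1 <;>
        simp [Set.indicator, hSdef, h]
    rw [heq]
    exact_mod_cast count_rank_le k hk1 hkN v
  -- sum of measures bound
  have hsum : (k : ENNReal) ≤ ∑ j, μ (S j) := by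
    have hint : ∑ j, μ (S j)
        = ∫⁻ v, ∑ j, (S j).indicator (1 : (Fin (N + 1) → ℝ) → ENNReal) v ∂μ := by
      rw [lintegral_finset_sum _ fun j _ => measurable_one.indicator (hSmeas j)]
      exact Finset.sum_congr rfl fun j _ => (lintegral_indicator_one (hSmeas j)).symm
    calc (k : ENNReal) = ∫⁻ _, (k : ENNReal) ∂μ := by
          rw [lintegral_const, measure_univ, mul_one]
      _ ≤ ∫⁻ v, ∑ j, (S j).indicator (1 : (Fin (N + 1) → ℝ) → ENNReal) v ∂μ :=
          lintegral_mono hcount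
      _ = ∑ j, μ (S j) := hint.symm
  have hsum' : (k : ENNReal) ≤ ((N : ENNReal) + 1) * μ (S (Fin.last N)) := by
    calc (k : ENNReal) ≤ ∑ j, μ (S j) := hsum
      _ = ((N : ENNReal) + 1) * μ (S (Fin.last N)) := by
          rw [Finset.sum_congr rfl fun j _ => hSj j, Finset.sum_const, Finset.card_univ,
            Fintype.card_fin, nsmul_eq_mul]
          push_cast
          ring
  -- event identification
  have hev : {ω | U (Fin.last N) ω ≤
        orderStat (⟨k - 1, by omega⟩ : Fin N) (fun i : Fin N => U i.castSucc ω)}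
      = (fun ω i => U i ω) ⁻¹' S (Fin.last N) := by
    ext ω
    simp only [Set.mem_setOf_eq, Set.mem_preimage, hSdef]
    rw [le_orderStat_iff]
    have hcard : (Finset.univ.filter fun i : Fin (N + 1) => U i ω < U (Fin.last N) ω).card
        = (Finset.univ.filter fun i : Fin N => U i.castSucc ω < U (Fin.last N) ω).card := by
      have h1 : (Finset.univ.filter fun i : Fin (N + 1) => U i ω < U (Fin.last N) ω)
          = (Finset.Iio (Fin.last N)).filter fun i => U i ω < U (Fin.last N) ω := by
        ext i
        simp only [Finset.mem_filter, Finset.mem_univ, true_and, Finset.mem_Iio]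
        constructor
        · intro hi
          refine ⟨?_, hi⟩
          rcases lt_or_eq_of_le (Fin.le_last i) with h | h
          · exact h
          · rw [h] at hi; exact absurd hi (lt_irrefl _)
        · exact fun h => h.2
      rw [h1, Fin.Iio_last_eq_map, Finset.filter_map, Finset.card_map]
      rfl
    exact (Iff.symm (by rw [hcard]))
  have hfinal : ℙ ((fun ω i => U i ω) ⁻¹' S (Fin.last N)) = μ (S (Fin.last N)) :=
    (Measure.map_apply hUvec (hSmeas (Fin.last N))).symm
  rw [hev, hfinal]
  have h1e : (0 : ℝ) < 1 - ε := by linarith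
  have hne0 : ((N : ENNReal) + 1) ≠ 0 := by simp
  have hnetop : ((N : ENNReal) + 1) ≠ ⊤ := by
    simp [ENNReal.add_eq_top]
  have hdiv : (k : ENNReal) / ((N : ENNReal) + 1) ≤ μ (S (Fin.last N)) :=
    ENNReal.div_le_of_le_mul' hsum'
  have hof : ENNReal.ofReal (1 - ε) ≤ (k : ENNReal) / ((N : ENNReal) + 1) := by
    rw [ENNReal.le_div_iff_mul_le (Or.inl hne0) (Or.inl hnetop)]
    calc ENNReal.ofReal (1 - ε) * ((N : ENNReal) + 1)
        = ENNReal.ofReal ((1 - ε) * ((N : ℝ) + 1)) := by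
          rw [ENNReal.ofReal_mul h1e.le]
          congr 1
          rw [ENNReal.ofReal_add (by positivity) zero_le_one, ENNReal.ofReal_natCast,
            ENNReal.ofReal_one]
      _ ≤ ENNReal.ofReal (k : ℝ) := ENNReal.ofReal_le_ofReal (by linarith)
      _ = (k : ENNReal) := ENNReal.ofReal_natCast k
  exact le_trans hof hdiv
end

section
/- Let U₁, …, U_{N+1} be real-valued random variables whose joint law is exchangeable (invariant under every permutation of the indices) and such that almost surely the values U₁, …, U_{N+1} are pairwise distinct. Then for every j ∈ {0, 1, …, N}, the probability that exactly j of the variables U₁, …, U_N are strictly smaller than U_{N+1} equals 1/(N+1); that is, the rank of U_{N+1} among the N+1 samples is uniformly distributed on {1, …, N+1}. -/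
/-!
For pairwise distinct reals `x₀, …, x_N`, the rank map `k ↦ #{i | x i < x k}` is a bijection onto
`{0, …, N}`, so for each `j` the events `{rank of U k is j}`, `k = 0, …, N`, a.s. partition the
sample space and their probabilities sum to `1`. Exchangeability (applied to a transposition)
gives all of them the same probability, which is therefore `1 / (N + 1)`.
-/

open MeasureTheory Finset Function

section Rank

variable {ι α : Type*} [Fintype ι] [LinearOrder α]

def rank (x : ι → α) (k : ι) : ℕ :=
  #{i | x i < x k}

lemma rank_comp_perm (x : ι → α) (σ : Equiv.Perm ι) (k : ι) :
    rank (x ∘ σ) k = rank x (σ k) :=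
  card_equiv σ fun i => by simp

lemma rank_lt_card (x : ι → α) (k : ι) : rank x k < Fintype.card ι :=
  card_lt_univ_of_notMem (x := k) (by simp)

lemma rank_lt_rank {x : ι → α} {k k' : ι} (h : x k < x k') : rank x k < rank x k' := by
  refine card_lt_card ((ssubset_iff_of_subset ?_).2 ⟨k, by simpa using h, by simp⟩)
  exact monotone_filter_right _ fun _ _ hi => hi.trans h

lemma rank_injective {x : ι → α} (hx : Injective x) : Injective (rank x) := by
  intro k k' h
  by_contra hne
  rcases (hx.ne hne).lt_or_gt with hlt | hlt
  · exact (rank_lt_rank hlt).ne h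
  · exact (rank_lt_rank hlt).ne' h

lemma existsUnique_rank_eq {x : ι → α} (hx : Injective x) {j : ℕ}
    (hj : j < Fintype.card ι) : ∃! k, rank x k = j := by
  let r : ι → Fin (Fintype.card ι) := fun k => ⟨rank x k, rank_lt_card x k⟩
  have hr : Bijective r := (Fintype.bijective_iff_injective_and_card r).2
    ⟨fun k k' h => rank_injective hx (Fin.val_eq_of_eq h), (Fintype.card_fin _).symm⟩
  simpa [r, Fin.ext_iff] using hr.existsUnique ⟨j, hj⟩

lemma rank_last {N : ℕ} (x : Fin (N + 1) → α) :
    rank x (Fin.last N) = #{i : Fin N | x i.castSucc < x (Fin.last N)} := by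
  rw [rank, card_filter, card_filter, Fin.sum_univ_castSucc]
  simp

end Rank

lemma sum_measure_eq_one_of_ae_existsUnique {Ω ι : Type*} [MeasurableSpace Ω] [Fintype ι]
    {μ : Measure Ω} [IsProbabilityMeasure μ] {B : ι → Set Ω} (hB : ∀ k, MeasurableSet (B k))
    (h : ∀ᵐ ω ∂μ, ∃! k, ω ∈ B k) : ∑ k, μ (B k) = 1 := by
  have hnull : μ {ω | ∃! k, ω ∈ B k}ᶜ = 0 := ae_iff.1 h
  have hdisj : Pairwise (AEDisjoint μ on B) := by
    refine fun k k' hne => measure_mono_null ?_ hnull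
    rintro ω ⟨hk, hk'⟩ hω
    exact hne (hω.unique hk hk')
  have hcover : ⋃ k, B k =ᵐ[μ] Set.univ :=
    ae_eq_univ.2 <| measure_mono_null
      (Set.compl_subset_compl.2 fun _ hω => Set.mem_iUnion.2 (ExistsUnique.exists hω)) hnull
  rw [← tsum_fintype (L := .unconditional _),
    ← measure_iUnion₀ hdisj fun k => (hB k).nullMeasurableSet, measure_congr hcover, measure_univ]

section Exchangeable

variable {Ω ι α : Type*} [MeasurableSpace Ω] [Fintype ι] [LinearOrder α] [TopologicalSpace α]
  [MeasurableSpace α] [OpensMeasurableSpace α] [SecondCountableTopology α] [OrderClosedTopology α]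
  {μ : Measure Ω} {X : Ω → ι → α}

lemma measurableSet_rank_eq (k : ι) (j : ℕ) : MeasurableSet {x : ι → α | rank x k = j} := by
  have : Measurable fun x : ι → α => rank x k := by
    simp only [rank, card_filter]
    exact measurable_sum _ fun i _ => Measurable.ite
      (measurableSet_lt (measurable_pi_apply i) (measurable_pi_apply k))
      measurable_const measurable_const
  exact this (measurableSet_singleton j)

lemma measure_rank_eq_of_exchangeable [DecidableEq ι] (hX : Measurable X)
    (hexch : ∀ σ : Equiv.Perm ι, μ.map (fun ω i => X ω (σ i)) = μ.map X) (k k' : ι) (j : ℕ) :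
    μ {ω | rank (X ω) k = j} = μ {ω | rank (X ω) k' = j} := by
  have hXσ : Measurable fun ω i => X ω (Equiv.swap k k' i) := by fun_prop
  have h := congrArg (· {x | rank x k' = j}) (hexch (Equiv.swap k k'))
  simp only [Measure.map_apply hXσ (measurableSet_rank_eq k' j),
    Measure.map_apply hX (measurableSet_rank_eq k' j)] at h
  simpa [Set.preimage, ← Function.comp_def, rank_comp_perm] using h

theorem measure_rank_eq_inv_card [DecidableEq ι] [IsProbabilityMeasure μ] (hX : Measurable X)
    (hexch : ∀ σ : Equiv.Perm ι, μ.map (fun ω i => X ω (σ i)) = μ.map X)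
    (hinj : ∀ᵐ ω ∂μ, Injective (X ω)) (k : ι) {j : ℕ} (hj : j < Fintype.card ι) :
    μ {ω | rank (X ω) k = j} = (Fintype.card ι : ENNReal)⁻¹ := by
  have hsum := sum_measure_eq_one_of_ae_existsUnique (B := fun k' => {ω | rank (X ω) k' = j})
    (fun k' => hX (measurableSet_rank_eq k' j)) (hinj.mono fun _ hω => existsUnique_rank_eq hω hj)
  rw [sum_congr rfl fun k' _ => measure_rank_eq_of_exchangeable hX hexch k' k j, sum_const,
    card_univ, nsmul_eq_mul] at hsum
  exact ENNReal.eq_inv_of_mul_eq_one_left (by rwa [mul_comm])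

end Exchangeable

/-- Rank-uniformity lemma underlying conformal prediction: if `U 0, …, U N` are exchangeable
real-valued random variables that are a.s. pairwise distinct, then for every `j ∈ {0, …, N}`,
the probability that exactly `j` of the first `N` variables are strictly smaller than the last
one equals `1 / (N + 1)`. -/
theorem rank_uniform_of_exchangeable
    {Ω : Type*} [MeasurableSpace Ω] (ℙ : Measure Ω) [IsProbabilityMeasure ℙ]
    (N : ℕ)
    (U : Fin (N + 1) → Ω → ℝ) (hU : ∀ i, Measurable (U i))
    (hexch : ∀ σ : Equiv.Perm (Fin (N + 1)),
      Measure.map (fun ω => fun i => U (σ i) ω) ℙ = Measure.map (fun ω => fun i => U i ω) ℙ)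
    (hdist : ∀ᵐ ω ∂ℙ, Function.Injective fun i => U i ω) :
    ∀ j : ℕ, j ≤ N →
      ℙ {ω | (Finset.univ.filter
          fun i : Fin N => U i.castSucc ω < U (Fin.last N) ω).card = j} = 1 / (N + 1) := by
  intro j hj
  have h := measure_rank_eq_inv_card (X := fun ω i => U i ω) (measurable_pi_lambda _ hU) hexch
    hdist (Fin.last N) (j := j) (by simpa using Nat.lt_succ_of_le hj)
  simpa [rank_last, one_div] using h
end

section
/- Let U₁, …, U_N, U_test be independent identically distributed real-valued random variables with continuous cumulative distribution function F. Fix ε̂ ∈ (0,1), set v := ⌊(N+1)ε̂⌋, assume 1 ≤ v ≤ N, and set q̂ := U_{(N+1−v)}, the (N+1−v)-th order statistic of U₁, …, U_N. Fix δ ∈ (0,1) and let β_δ denote the δ-quantile of the Beta distribution with parameters (N+1−v, v), i.e. the infimum of all x ∈ [0,1] whose Beta(N+1−v, v) cumulative distribution function value is at least δ. Then with probability at least 1 − δ over the sampling of U₁, …, U_N, the conditional coverage satisfies ℙ(U_test ≤ q̂ ∣ U₁, …, U_N) = F(q̂) ≥ β_δ. -/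
open MeasureTheory

/-- The Beta function `B(a, b) = Γ(a) Γ(b) / Γ(a + b)`. -/
noncomputable def betaFn (a b : ℝ) : ℝ := Real.Gamma a * Real.Gamma b / Real.Gamma (a + b)

/-- The Beta distribution with natural-number parameters `(a, b)`: the measure on `ℝ`
with density `x ↦ x ^ (a - 1) * (1 - x) ^ (b - 1) / B(a, b)` on `[0, 1]` with respect to
Lebesgue measure. -/
noncomputable def betaMeasureNat (a b : ℕ) : Measure ℝ :=
  volume.withDensity (Set.indicator (Set.Icc 0 1)
    fun x => ENNReal.ofReal (x ^ (a - 1) * (1 - x) ^ (b - 1) / betaFn a b))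

/-! Write `β` for the `δ`-quantile of `Beta(m, v)`, `m = N + 1 - v`. As `F` is monotone,
`F q̂ < β` forces at least `m` of the samples into the lower set `B = {F ≤ β}`; they fall there
independently with probability `μ B ≤ β` (continuity of `F`). So `ℙ(F q̂ < β) ≤ ℙ(Bin(N, β) ≥ m)`,
and this binomial tail is the `Beta(m, v)` CDF at `β`: both vanish at `0` and have derivative
`m C(N, m) p ^ (m - 1) (1 - p) ^ (N - m)`. Being continuous, that CDF is at most `δ` at `β`. -/

open Finset
open ProbabilityTheory (cdf cdf_eq_real tendsto_cdf_atTop iIndepFun)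

def binomTail (n m : ℕ) (p : ℝ) : ℝ :=
  ∑ j ∈ Ico m (n + 1), (n.choose j : ℝ) * p ^ j * (1 - p) ^ (n - j)

section BinomialTail

variable {n m : ℕ}

namespace binomTail

theorem continuous : Continuous (binomTail n m) := by
  unfold binomTail; fun_prop

theorem apply_zero (hm : 1 ≤ m) : binomTail n m 0 = 0 :=
  sum_eq_zero fun j hj => by
    rw [zero_pow (by grind), mul_zero, zero_mul]

theorem apply_one (hmn : m ≤ n) : binomTail n m 1 = 1 := by
  rw [binomTail, sum_eq_single_of_mem n (mem_Ico.2 ⟨hmn, n.lt_succ_self⟩)]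
  · simp
  · intro j hj hjn
    rw [sub_self, zero_pow (by grind), mul_zero]

theorem nonneg {p : ℝ} (hp : p ∈ Set.Icc 0 1) : 0 ≤ binomTail n m p :=
  sum_nonneg fun j _ => by
    have := hp.1
    have : 0 ≤ 1 - p := by linarith [hp.2]
    positivity

theorem hasDerivAt (p : ℝ) :
    HasDerivAt (binomTail n m) (m * n.choose m * p ^ (m - 1) * (1 - p) ^ (n - m)) p := by
  set W : ℕ → ℝ := fun j => j * n.choose j * p ^ (j - 1) * (1 - p) ^ (n - j)
  have hterm (j : ℕ) :
      HasDerivAt (fun p : ℝ => (n.choose j : ℝ) * p ^ j * (1 - p) ^ (n - j))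
        (W j - W (j + 1)) p := by
    have hchoose : ((j : ℝ) + 1) * n.choose (j + 1) = n.choose j * (n - j : ℕ) := by
      exact_mod_cast (mul_comm _ _).trans (Nat.choose_succ_right_eq n j)
    refine (((hasDerivAt_pow j p).const_mul (n.choose j : ℝ)).fun_mul
      (((hasDerivAt_id' p).const_sub 1).fun_pow (n - j))).congr_deriv ?_
    simp only [W, Nat.add_sub_cancel, show n - (j + 1) = n - j - 1 by omega]
    push_cast
    linear_combination (p ^ j * (1 - p) ^ (n - j - 1)) * hchoose
  have htelescope : ∑ j ∈ Ico m (n + 1), (W j - W (j + 1)) = W m := by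
    rcases le_or_gt m (n + 1) with hmn | hmn
    · rw [← neg_inj, ← sum_neg_distrib]
      simp only [neg_sub]
      rw [sum_Ico_sub W hmn]
      simp [W]
    · simp [W, Ico_eq_empty_of_le hmn.le, Nat.choose_eq_zero_of_lt (by omega : n < m)]
  have hsum := HasDerivAt.fun_sum fun j (_ : j ∈ Ico m (n + 1)) => hterm j
  rw [htelescope] at hsum
  exact hsum

theorem eq_integral (hm : 1 ≤ m) (t : ℝ) :
    binomTail n m t = m * n.choose m * ∫ x in (0 : ℝ)..t, x ^ (m - 1) * (1 - x) ^ (n - m) := by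
  calc binomTail n m t = binomTail n m t - binomTail n m 0 := by rw [apply_zero hm, sub_zero]
    _ = ∫ x in (0 : ℝ)..t, m * n.choose m * x ^ (m - 1) * (1 - x) ^ (n - m) :=
      (intervalIntegral.integral_eq_sub_of_hasDerivAt (fun x _ => hasDerivAt x)
        (by apply Continuous.intervalIntegrable; fun_prop)).symm
    _ = _ := by simp only [mul_assoc, intervalIntegral.integral_const_mul]

theorem monotoneOn : MonotoneOn (binomTail n m) (Set.Icc 0 1) :=
  monotoneOn_of_hasDerivWithinAt_nonneg (convex_Icc 0 1) continuous.continuousOn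
    (fun x _ => (hasDerivAt x).hasDerivWithinAt) fun x hx => by
      rw [interior_Icc] at hx
      have : 0 ≤ 1 - x := by linarith [hx.2]
      have := hx.1.le
      positivity

end binomTail

theorem betaFn_natCast {a b : ℕ} (ha : 1 ≤ a) (hb : 1 ≤ b) :
    betaFn a b = ((a : ℝ) * (a + b - 1).choose a)⁻¹ := by
  obtain ⟨k, rfl⟩ := Nat.exists_eq_add_of_le' ha
  obtain ⟨l, rfl⟩ := Nat.exists_eq_add_of_le' hb
  have hfact : ((k + 1 + l).choose (k + 1) * (k + 1).factorial * l.factorial : ℝ) =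
      (k + 1 + l).factorial := by
    have := Nat.choose_mul_factorial_mul_factorial (Nat.le_add_right (k + 1) l)
    rw [Nat.add_sub_cancel_left] at this
    exact_mod_cast this
  rw [betaFn, show k + 1 + (l + 1) - 1 = k + 1 + l by omega,
    show ((k + 1 : ℕ) : ℝ) + (l + 1 : ℕ) = (k + 1 + l : ℕ) + 1 by push_cast; ring,
    Real.Gamma_nat_eq_factorial, ← hfact, Nat.factorial_succ]
  push_cast
  rw [Real.Gamma_nat_eq_factorial, Real.Gamma_nat_eq_factorial]
  field_simp

theorem betaMeasureNat_Iic {a b : ℕ} (ha : 1 ≤ a) (hb : 1 ≤ b) {t : ℝ} (ht : t ∈ Set.Icc 0 1) :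
    betaMeasureNat a b (Set.Iic t) = ENNReal.ofReal (binomTail (a + b - 1) a t) := by
  have hdensity : ContinuousOn (fun x : ℝ => x ^ (a - 1) * (1 - x) ^ (b - 1) / betaFn a b)
      (Set.Icc 0 t) := by fun_prop
  rw [betaMeasureNat, withDensity_apply _ measurableSet_Iic, lintegral_indicator measurableSet_Icc,
    Measure.restrict_restrict measurableSet_Icc,
    show Set.Icc 0 1 ∩ Set.Iic t = Set.Icc 0 t by ext; grind,
    ← ofReal_integral_eq_lintegral_ofReal hdensity.integrableOn_Icc ?_,
    integral_Icc_eq_integral_Ioc, ← intervalIntegral.integral_of_le ht.1,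
    binomTail.eq_integral ha, betaFn_natCast ha hb, show a + b - 1 - a = b - 1 by omega]
  · simp only [div_inv_eq_mul, intervalIntegral.integral_mul_const]
    rw [mul_comm]
  · refine ae_restrict_of_forall_mem measurableSet_Icc fun x hx => ?_
    have : 0 ≤ 1 - x := by linarith [hx.2, ht.2]
    have := hx.1
    rw [betaFn_natCast ha hb]
    positivity

end BinomialTail

open Classical in
theorem orderStat_mem_iff_of_isLowerSet {α : Type*} [LinearOrder α] {N : ℕ} (k : Fin N)
    (w : Fin N → α) {A : Set α} (hA : IsLowerSet A) :
    orderStat k w ∈ A ↔ (k : ℕ) + 1 ≤ #{i | w i ∈ A} := by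
  set σ := Tuple.sort w
  have hmono : Monotone (w ∘ σ) := Tuple.monotone_sort w
  constructor
  · intro hk
    calc (k : ℕ) + 1 = #((Iic k).map σ.toEmbedding) := by simp
      _ ≤ _ := card_le_card fun i hi => by
        obtain ⟨j, hj, rfl⟩ := mem_map.1 hi
        simpa using hA (hmono (mem_Iic.1 hj)) hk
  · intro hcard
    by_contra hk
    have hsub : ({i | w i ∈ A} : Finset (Fin N)).map σ.symm.toEmbedding ⊆ Iio k := fun j hj => by
      obtain ⟨i, hi, rfl⟩ := mem_map.1 hj
      refine mem_Iio.2 (lt_of_not_ge fun hle => hk (hA ?_ (mem_filter.1 hi).2))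
      simpa [orderStat] using hmono hle
    have := card_le_card hsub
    simp only [card_map, Fin.card_Iio] at this
    omega

section Counting

variable {Ω ι α : Type*} [Fintype ι] {X : ι → Ω → α} {A : Set α}

open Classical in
theorem setOf_filter_mem_eq_iInter (s : Finset ι) :
    {ω | ({i | X i ω ∈ A} : Finset ι) = s} = ⋂ i, X i ⁻¹' (if i ∈ s then A else Aᶜ) := by
  ext ω
  simp only [Set.mem_ofPred_eq, Finset.ext_iff, mem_filter, mem_univ, true_and, Set.mem_iInter,
    Set.mem_preimage]
  refine forall_congr' fun i => ?_
  split_ifs with hi <;> simp [hi]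

variable [MeasurableSpace Ω] [MeasurableSpace α] {ℙ : Measure Ω} {μ : Measure α}
  [IsProbabilityMeasure μ]

open Classical in
theorem measureReal_setOf_filter_mem_eq (hX : ∀ i, Measurable (X i))
    (hindep : iIndepFun X ℙ) (hlaw : ∀ i, ℙ.map (X i) = μ)
    (hA : MeasurableSet A) (s : Finset ι) :
    ℙ.real {ω | ({i | X i ω ∈ A} : Finset ι) = s} =
      μ.real A ^ #s * (1 - μ.real A) ^ (Fintype.card ι - #s) := by
  have hfactor (i : ι) : (ℙ (X i ⁻¹' (if i ∈ s then A else Aᶜ))).toReal =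
      if i ∈ s then μ.real A else 1 - μ.real A := by
    split_ifs
    · rw [← measureReal_def, ← map_measureReal_apply (hX i) hA, hlaw]
    · rw [← measureReal_def, ← map_measureReal_apply (hX i) hA.compl, hlaw,
        probReal_compl_eq_one_sub hA]
  rw [setOf_filter_mem_eq_iInter, measureReal_def,
    hindep.meas_iInter fun i => ⟨_, by split_ifs; exacts [hA, hA.compl], rfl⟩,
    ENNReal.toReal_prod]
  simp_rw [hfactor, prod_ite, prod_const]
  simp [filter_notMem_eq_sdiff, card_sdiff]

open Classical in
theorem measureReal_le_card_filter_mem [IsProbabilityMeasure ℙ] (hX : ∀ i, Measurable (X i))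
    (hindep : iIndepFun X ℙ) (hlaw : ∀ i, ℙ.map (X i) = μ)
    (hA : MeasurableSet A) (m : ℕ) :
    ℙ.real {ω | m ≤ #{i | X i ω ∈ A}} = binomTail (Fintype.card ι) m (μ.real A) := by
  have hunion : {ω | m ≤ #{i | X i ω ∈ A}} =
      ⋃ s ∈ ({s | m ≤ #s} : Finset (Finset ι)), {ω | ({i | X i ω ∈ A} : Finset ι) = s} := by
    ext ω; simp
  rw [hunion, measureReal_biUnion_finset
    (fun s _ t _ hst => Set.disjoint_left.2 fun ω hs ht => hst (hs.symm.trans ht))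
    (fun s _ => setOf_filter_mem_eq_iInter (X := X) (A := A) s ▸
      MeasurableSet.iInter fun i => hX i (by split_ifs; exacts [hA, hA.compl]))]
  simp_rw [measureReal_setOf_filter_mem_eq hX hindep hlaw hA, sum_filter, ← powerset_univ,
    sum_powerset_apply_card (fun j => if m ≤ j then μ.real A ^ j * (1 - μ.real A) ^ _ else 0)]
  have hrange : ({j ∈ range (Fintype.card ι + 1) | m ≤ j} : Finset ℕ) =
      Ico m (Fintype.card ι + 1) := by
    ext; simp [and_comm]
  simp only [card_univ, smul_ite, smul_zero, ← sum_filter, hrange, nsmul_eq_mul, mul_assoc,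
    binomTail]

end Counting

section Quantile

variable {g : ℝ → ℝ} {δ : ℝ}

theorem sInf_superlevelSet_mem_Icc (h1 : δ ≤ g 1) :
    sInf {x | x ∈ Set.Icc 0 1 ∧ δ ≤ g x} ∈ Set.Icc 0 1 :=
  ⟨le_csInf ⟨1, by simp [h1]⟩ fun x hx => hx.1.1, csInf_le ⟨0, fun x hx => hx.1.1⟩ (by simp [h1])⟩

theorem apply_sInf_superlevelSet_le (hg : ContinuousOn g (Set.Icc 0 1)) (h0 : g 0 ≤ δ)
    (h1 : δ ≤ g 1) : g (sInf {x | x ∈ Set.Icc 0 1 ∧ δ ≤ g x}) ≤ δ := by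
  set β := sInf {x | x ∈ Set.Icc 0 1 ∧ δ ≤ g x}
  obtain ⟨hβ0, hβ1⟩ : β ∈ Set.Icc 0 1 := sInf_superlevelSet_mem_Icc h1
  rcases hβ0.eq_or_lt with hβ | hβ
  · rwa [← hβ]
  have hbelow : Set.Ico 0 β ⊆ {x ∈ Set.Icc 0 β | g x ≤ δ} := fun x hx =>
    ⟨Set.Ico_subset_Icc_self hx, le_of_lt <| lt_of_not_ge fun hδx =>
      (notMem_of_lt_csInf hx.2 ⟨0, fun y hy => hy.1.1⟩) ⟨⟨hx.1, hx.2.le.trans hβ1⟩, hδx⟩⟩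
  have hclosed : IsClosed {x ∈ Set.Icc 0 β | g x ≤ δ} :=
    (hg.mono (Set.Icc_subset_Icc_right hβ1)).preimage_isClosed_of_isClosed isClosed_Icc isClosed_Iic
  have hIcc : Set.Icc 0 β ⊆ {x ∈ Set.Icc 0 β | g x ≤ δ} := by
    simpa only [closure_Ico hβ.ne] using closure_minimal hbelow hclosed
  exact (hIcc (Set.right_mem_Icc.2 hβ0)).2

end Quantile

theorem measureReal_cdf_le_le {μ : Measure ℝ} [IsProbabilityMeasure μ] (hcont : Continuous (cdf μ))
    {t : ℝ} (ht : 0 ≤ t) : μ.real {x | cdf μ x ≤ t} ≤ t := by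
  set B := {x | cdf μ x ≤ t}
  by_cases hbdd : BddAbove B
  · rcases B.eq_empty_or_nonempty with hB | hB
    · simp [hB, ht]
    have hmem : sSup B ∈ B := (isClosed_le hcont continuous_const).csSup_mem hB hbdd
    calc μ.real B ≤ μ.real (Set.Iic (sSup B)) := measureReal_mono fun x hx => le_csSup hbdd hx
      _ = cdf μ (sSup B) := (cdf_eq_real μ _).symm
      _ ≤ t := hmem
  · have hle (x : ℝ) : cdf μ x ≤ t := by
      obtain ⟨y, hy, hxy⟩ := not_bddAbove_iff.1 hbdd x
      exact ((cdf μ).mono hxy.le).trans hy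
    calc μ.real B ≤ 1 := measureReal_le_one
      _ ≤ t := le_of_tendsto' (tendsto_cdf_atTop μ) hle

theorem measure_cdf_orderStat_lt_le {Ω : Type*} [MeasurableSpace Ω] {ℙ : Measure Ω}
    [IsProbabilityMeasure ℙ] {μ : Measure ℝ} [IsProbabilityMeasure μ] (hcont : Continuous (cdf μ))
    {N : ℕ} {X : Fin N → Ω → ℝ} (hX : ∀ i, Measurable (X i)) (hindep : iIndepFun X ℙ)
    (hlaw : ∀ i, ℙ.map (X i) = μ) (k : Fin N) {β : ℝ} (hβ : β ∈ Set.Icc 0 1) :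
    ℙ {ω | cdf μ (orderStat k fun i => X i ω) < β} ≤ ENNReal.ofReal (binomTail N (k + 1) β) := by
  classical
  set B := {x | cdf μ x ≤ β}
  have hB : IsLowerSet B := fun x y hyx hx => ((cdf μ).mono hyx).trans hx
  calc ℙ {ω | cdf μ (orderStat k fun i => X i ω) < β}
      ≤ ℙ {ω | (k : ℕ) + 1 ≤ #{i | X i ω ∈ B}} :=
        measure_mono fun ω (hω : _ < β) => (orderStat_mem_iff_of_isLowerSet k _ hB).1 hω.le
    _ = ENNReal.ofReal (binomTail N (k + 1) (μ.real B)) := by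
      rw [← ofReal_measureReal, measureReal_le_card_filter_mem hX hindep hlaw
        (measurableSet_le hcont.measurable measurable_const), Fintype.card_fin]
    _ ≤ ENNReal.ofReal (binomTail N (k + 1) β) := ENNReal.ofReal_le_ofReal <|
      binomTail.monotoneOn ⟨measureReal_nonneg, measureReal_le_one⟩ hβ
        (measureReal_cdf_le_le hcont hβ.1)

theorem dataset_conditional_conformal
    {Ω : Type*} [MeasurableSpace Ω] (ℙ : Measure Ω) [IsProbabilityMeasure ℙ]
    (N : ℕ)
    (μ : Measure ℝ) [IsProbabilityMeasure μ]
    (F : ℝ → ℝ) (hFdef : ∀ x, F x = (μ (Set.Iic x)).toReal) (hFcont : Continuous F)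
    (U : Fin (N + 1) → Ω → ℝ) (hU : ∀ i, Measurable (U i))
    (hlaw : ∀ i, Measure.map (U i) ℙ = μ)
    (hindep : ProbabilityTheory.iIndepFun U ℙ)
    (v : ℕ) (hv1 : 1 ≤ v) (hvN : v ≤ N)
    (δ : ℝ) (hδ : δ ∈ Set.Ioo (0 : ℝ) 1) :
    ℙ {ω | sInf {x : ℝ | x ∈ Set.Icc (0 : ℝ) 1 ∧
            δ ≤ ((betaMeasureNat (N + 1 - v) v) (Set.Iic x)).toReal} ≤
          F (orderStat (⟨N - v, by omega⟩ : Fin N) (fun i : Fin N => U i.castSucc ω))} ≥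
      ENNReal.ofReal (1 - δ) := by
  obtain rfl : F = cdf μ := funext fun x => (hFdef x).trans (cdf_eq_real μ x).symm
  have hquantile : {x | x ∈ Set.Icc 0 1 ∧ δ ≤ (betaMeasureNat (N + 1 - v) v (Set.Iic x)).toReal} =
      {x | x ∈ Set.Icc 0 1 ∧ δ ≤ binomTail N (N - v + 1) x} :=
    Set.ext fun x => and_congr_right fun hx => by
      rw [betaMeasureNat_Iic (by omega) hv1 hx, ENNReal.toReal_ofReal (binomTail.nonneg hx),
        show N + 1 - v + v - 1 = N by omega, show N - v + 1 = N + 1 - v by omega]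
  rw [hquantile]
  have hδ_le : δ ≤ binomTail N (N - v + 1) 1 := by
    rw [binomTail.apply_one (by omega)]; exact hδ.2.le
  have hβδ := apply_sInf_superlevelSet_le binomTail.continuous.continuousOn
    (by rw [binomTail.apply_zero le_add_self]; exact hδ.1.le) hδ_le
  have hbad := measure_cdf_orderStat_lt_le hFcont (fun i => hU _)
    (hindep.precomp (Fin.castSucc_injective N)) (fun i => hlaw _) ⟨N - v, by omega⟩
    (sInf_superlevelSet_mem_Icc hδ_le)
  simp only [← not_le, ← Set.compl_ofPred] at hbad
  rw [ENNReal.ofReal_sub _ hδ.1.le, ENNReal.ofReal_one, ge_iff_le, tsub_le_iff_right]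
  calc 1 = ℙ Set.univ := measure_univ.symm
    _ ≤ _ + ℙ _ := measure_univ_le_add_compl _
    _ ≤ _ := add_le_add_right (hbad.trans (ENNReal.ofReal_le_ofReal hβδ)) _
end
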